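/- arXiv:1811.03526 — 2 statements merged into one kernel-verified Lean document; each statement's English description precedes it below -/
import Mathlib

section
/- For every r > 0 the identity −(1/2)·d/dr( Υ(r)·V₂(r) ) − (4Υ(r)/r⁵)·(r² − 4Mr + 3Q²) = (3/r⁷)·( 3Mr³ − (8M² + 4Q²)r² + 15MQ²r − 6Q⁴ ) holds, and this quantity is strictly positive for every r ≥ r_P. -/
noncomputable section

/-- The Reissner–Nordström lapse function `Υ(r) = 1 - 2M/r + Q²/r²`. -/
def Upsilon (M Q r : ℝ) : ℝ := 1 - 2*M/r + Q^2/r^2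

/-- The photon-sphere radius `r_P = (3M + √(9M² - 8Q²))/2`. -/
def rP (M Q : ℝ) : ℝ := (3*M + Real.sqrt (9*M^2 - 8*Q^2)) / 2

/-- The Regge–Wheeler potential `V₂(r) = r⁻²(4 - 2M/r - 2Q²/r²)`. -/
def V2 (M Q r : ℝ) : ℝ := (1 / r^2) * (4 - 2*M/r - 2*Q^2/r^2)

/-!
The identity is a direct computation with the rational functions `Υ` and `V₂`. For positivity,
write the cubic as `(r² - 3Mr + 2Q²)(3Mr + M² - 4Q²) + (M² - Q²)(3Mr - 2Q²)`. The photon-sphere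
radius `r_P` is the larger root of `r² - 3Mr + 2Q²`, so the first factor is nonnegative for
`r ≥ r_P`; and `r_P ≥ 2M`, which makes the remaining factors positive when `Q² < M²`.
-/

theorem hasDerivAt_const_div_pow (c : ℝ) (n : ℕ) {r : ℝ} (hr : r ≠ 0) :
    HasDerivAt (fun s : ℝ => c / s ^ n) (-(n * c) / r ^ (n + 1)) r := by
  refine ((hasDerivAt_const r c).fun_div (hasDerivAt_pow n r) (pow_ne_zero n hr)).congr_deriv ?_
  rcases n with _ | n
  · simp
  · rw [Nat.add_sub_cancel]
    field_simp
    ring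

theorem hasDerivAt_Upsilon (M Q : ℝ) {r : ℝ} (hr : r ≠ 0) :
    HasDerivAt (Upsilon M Q) (2*M/r^2 - 2*Q^2/r^3) r := by
  have h := ((hasDerivAt_const r 1).sub (hasDerivAt_const_div_pow (2*M) 1 hr)).add
    (hasDerivAt_const_div_pow (Q^2) 2 hr)
  refine (h.congr_deriv (by ring)).congr_of_eventuallyEq (.of_forall fun s => ?_)
  simp [Upsilon]

theorem hasDerivAt_V2 (M Q : ℝ) {r : ℝ} (hr : r ≠ 0) :
    HasDerivAt (V2 M Q) (-8/r^3 + 6*M/r^4 + 8*Q^2/r^5) r := by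
  have h := ((hasDerivAt_const_div_pow 4 2 hr).sub (hasDerivAt_const_div_pow (2*M) 3 hr)).sub
    (hasDerivAt_const_div_pow (2*Q^2) 4 hr)
  refine (h.congr_deriv (by ring)).congr_of_eventuallyEq (.of_forall fun s => ?_)
  simp only [V2, Pi.sub_apply]
  ring

theorem rP_sq {M Q : ℝ} (h : 8*Q^2 ≤ 9*M^2) : rP M Q ^ 2 = 3*M*rP M Q - 2*Q^2 := by
  have hsq := Real.sq_sqrt (show 0 ≤ 9*M^2 - 8*Q^2 by linarith)
  unfold rP
  linear_combination hsq / 4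

theorem quadratic_nonneg_of_rP_le {M Q r : ℝ} (h : 8*Q^2 ≤ 9*M^2) (hr : rP M Q ≤ r) :
    0 ≤ r^2 - 3*M*r + 2*Q^2 := by
  have hroots : r^2 - 3*M*r + 2*Q^2 = (r - rP M Q) * (r - (3*M - rP M Q)) := by
    linear_combination rP_sq h
  have hother : 3*M - rP M Q ≤ rP M Q := by
    unfold rP
    linarith [Real.sqrt_nonneg (9*M^2 - 8*Q^2)]
  rw [hroots]
  exact mul_nonneg (by linarith) (by linarith)

theorem two_mul_le_rP {M Q : ℝ} (hQ : Q^2 ≤ M^2) : 2*M ≤ rP M Q := by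
  have : M ≤ Real.sqrt (9*M^2 - 8*Q^2) := Real.le_sqrt_of_sq_le (by linarith)
  unfold rP
  linarith

theorem cubic_pos_of_quadratic_nonneg {M Q r : ℝ} (hM : 0 < M) (hQ : Q^2 < M^2) (hr : 2*M ≤ r)
    (hquad : 0 ≤ r^2 - 3*M*r + 2*Q^2) :
    0 < 3*M*r^3 - (8*M^2 + 4*Q^2)*r^2 + 15*M*Q^2*r - 6*Q^4 := by
  have hMr : 2*M^2 ≤ M*r := by nlinarith
  have hdecomp : 3*M*r^3 - (8*M^2 + 4*Q^2)*r^2 + 15*M*Q^2*r - 6*Q^4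
      = (r^2 - 3*M*r + 2*Q^2) * (3*M*r + M^2 - 4*Q^2) + (M^2 - Q^2) * (3*M*r - 2*Q^2) := by
    ring
  rw [hdecomp]
  have hfirst := mul_nonneg hquad (show 0 ≤ 3*M*r + M^2 - 4*Q^2 by nlinarith)
  have hsecond := mul_pos (sub_pos.2 hQ) (show 0 < 3*M*r - 2*Q^2 by nlinarith)
  linarith

theorem A2_identity_and_pos (M Q : ℝ) (hM : 0 < M) (hQ : |Q| < M) :
    (∀ r : ℝ, 0 < r →
      -(1/2) * deriv (fun s => Upsilon M Q s * V2 M Q s) r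
        - (4 * Upsilon M Q r / r^5) * (r^2 - 4*M*r + 3*Q^2)
        = (3 / r^7) * (3*M*r^3 - (8*M^2 + 4*Q^2)*r^2 + 15*M*Q^2*r - 6*Q^4)) ∧
    (∀ r : ℝ, rP M Q ≤ r →
      0 < (3 / r^7) * (3*M*r^3 - (8*M^2 + 4*Q^2)*r^2 + 15*M*Q^2*r - 6*Q^4)) := by
  have hQM : Q^2 < M^2 := sq_lt_sq' (abs_lt.1 hQ).1 (abs_lt.1 hQ).2
  constructor
  · intro r hr
    rw [((hasDerivAt_Upsilon M Q hr.ne').fun_mul (hasDerivAt_V2 M Q hr.ne')).deriv]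
    unfold Upsilon V2
    field_simp
    ring
  · intro r hr
    have h2M : 2*M ≤ r := (two_mul_le_rP hQM.le).trans hr
    have hquad := quadratic_nonneg_of_rP_le (by linarith [sq_nonneg Q]) hr
    have hr0 : 0 < r := by linarith
    exact mul_pos (by positivity) (cubic_pos_of_quadratic_nonneg hM hQM h2M hquad)
end
end

section
/- For every r with r_P ≤ r < (4/3)·r_P, one has (4/r³) · ∫_{r_P}^{r} s²/Υ(s) ds < 1/Υ(r). -/
noncomputable section

/-!
Writing `r²/Υ(r) = r⁴/(r² - 2Mr + Q²)`, its derivative is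
`2r³(r² - 3Mr + 2Q²)/(r² - 2Mr + Q²)²`, and `r_P` is the largest root of `r² - 3Mr + 2Q²`.
So `s²/Υ(s)` is increasing on `[r_P, ∞)`, the integral is at most `(r - r_P) r²/Υ(r)`, and
`4(r - r_P) < r` exactly when `r < (4/3) r_P`.
-/

open Set

variable {M Q s : ℝ}

theorem MonotoneOn.intervalIntegral_le_sub_mul {f : ℝ → ℝ} {a b : ℝ} (hab : a ≤ b)
    (hf : MonotoneOn f (Icc a b)) : ∫ x in a..b, f x ≤ (b - a) * f b := by
  have hb : b ∈ Icc a b := right_mem_Icc.mpr hab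
  have := intervalIntegral.integral_mono_on hab
    (uIcc_of_le hab ▸ hf).intervalIntegrable
    (intervalIntegrable_const (μ := MeasureTheory.volume)) fun x hx => hf hx hb hx.2
  simpa using this

theorem three_mul_div_two_le_rP (M Q : ℝ) : 3 * M / 2 ≤ rP M Q := by
  have := Real.sqrt_nonneg (9*M^2 - 8*Q^2)
  rw [rP]; linarith

theorem rP_pos (hM : 0 < M) : 0 < rP M Q := by
  have := three_mul_div_two_le_rP M Q
  linarith

theorem rP_sq_sub_three_mul_add_eq_zero (hQ : 8 * Q^2 ≤ 9 * M^2) :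
    rP M Q ^ 2 - 3 * M * rP M Q + 2 * Q^2 = 0 := by
  have := Real.sq_sqrt (show 0 ≤ 9*M^2 - 8*Q^2 by linarith)
  rw [rP]; linear_combination this / 4

theorem sq_sub_three_mul_add_nonneg_of_rP_le (hQ : 8 * Q^2 ≤ 9 * M^2) (hs : rP M Q ≤ s) :
    0 ≤ s^2 - 3*M*s + 2*Q^2 := by
  have hroot := rP_sq_sub_three_mul_add_eq_zero hQ
  have := three_mul_div_two_le_rP M Q
  nlinarith [mul_nonneg (sub_nonneg.mpr hs) (show 0 ≤ s + rP M Q - 3*M by linarith)]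

theorem sq_sub_two_mul_add_pos_of_rP_le (hM : 0 < M) (hQ : 8 * Q^2 ≤ 9 * M^2)
    (hs : rP M Q ≤ s) : 0 < s^2 - 2*M*s + Q^2 := by
  have := sq_sub_three_mul_add_nonneg_of_rP_le hQ hs
  have := (three_mul_div_two_le_rP M Q).trans hs
  nlinarith

theorem Upsilon_eq_div (hs : s ≠ 0) : Upsilon M Q s = (s^2 - 2*M*s + Q^2) / s^2 := by
  rw [Upsilon]; field_simp

theorem Upsilon_pos_of_rP_le (hM : 0 < M) (hQ : 8 * Q^2 ≤ 9 * M^2) (hs : rP M Q ≤ s) :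
    0 < Upsilon M Q s := by
  have hs0 := (rP_pos hM).trans_le hs
  rw [Upsilon_eq_div hs0.ne']
  exact div_pos (sq_sub_two_mul_add_pos_of_rP_le hM hQ hs) (by positivity)

theorem sq_div_Upsilon_eq (hs : s ≠ 0) :
    s^2 / Upsilon M Q s = s^4 / (s^2 - 2*M*s + Q^2) := by
  rw [Upsilon_eq_div hs, div_div_eq_mul_div]; ring

theorem hasDerivAt_pow_four_div (hD : s^2 - 2*M*s + Q^2 ≠ 0) :
    HasDerivAt (fun x => x^4 / (x^2 - 2*M*x + Q^2))
      (2 * s^3 * (s^2 - 3*M*s + 2*Q^2) / (s^2 - 2*M*s + Q^2)^2) s := by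
  have hnum : HasDerivAt (fun x : ℝ => x^4) (4 * s^3) s := by
    simpa using hasDerivAt_pow 4 s
  have hden : HasDerivAt (fun x => x^2 - 2*M*x + Q^2) (2*s - 2*M) s := by
    simpa using ((hasDerivAt_pow 2 s).sub ((hasDerivAt_id s).const_mul (2*M))).add_const (Q^2)
  exact (hnum.div hden hD).congr_deriv (by ring)

theorem monotoneOn_sq_div_Upsilon (hM : 0 < M) (hQ : 8 * Q^2 ≤ 9 * M^2) :
    MonotoneOn (fun s => s^2 / Upsilon M Q s) (Ici (rP M Q)) := by
  have hderiv : ∀ s ∈ Ici (rP M Q), HasDerivAt (fun x => x^4 / (x^2 - 2*M*x + Q^2))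
      (2 * s^3 * (s^2 - 3*M*s + 2*Q^2) / (s^2 - 2*M*s + Q^2)^2) s :=
    fun s hs => hasDerivAt_pow_four_div (sq_sub_two_mul_add_pos_of_rP_le hM hQ hs).ne'
  refine MonotoneOn.congr (monotoneOn_of_hasDerivWithinAt_nonneg (convex_Ici _)
    (fun s hs => (hderiv s hs).continuousAt.continuousWithinAt)
    (fun s hs => (hderiv s (interior_subset hs)).hasDerivWithinAt) fun s hs => ?_)
    fun s hs => (sq_div_Upsilon_eq ((rP_pos hM).trans_le hs).ne').symm
  have hs : rP M Q ≤ s := interior_subset hs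
  have := sq_sub_three_mul_add_nonneg_of_rP_le hQ hs
  have := (rP_pos hM).trans_le hs
  positivity

theorem integral_bound_below_fourThirds_rP (M Q : ℝ) (hM : 0 < M) (hQ : |Q| < M) :
    ∀ r : ℝ, rP M Q ≤ r → r < (4/3) * rP M Q →
      (4 / r^3) * (∫ s in (rP M Q)..r, s^2 / Upsilon M Q s) < 1 / Upsilon M Q r := by
  intro r hr hr'
  have hQ' : 8 * Q^2 ≤ 9 * M^2 := by nlinarith [sq_abs Q, abs_nonneg Q]
  have hr0 : 0 < r := (rP_pos hM).trans_le hr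
  have hU : 0 < Upsilon M Q r := Upsilon_pos_of_rP_le hM hQ' hr
  have hle := ((monotoneOn_sq_div_Upsilon hM hQ').mono Icc_subset_Ici_self
    |>.intervalIntegral_le_sub_mul hr)
  calc (4 / r^3) * (∫ s in (rP M Q)..r, s^2 / Upsilon M Q s)
      ≤ (4 / r^3) * ((r - rP M Q) * (r^2 / Upsilon M Q r)) :=
        mul_le_mul_of_nonneg_left hle (by positivity)
    _ = 4 * (r - rP M Q) / r * (1 / Upsilon M Q r) := by field_simp
    _ < 1 * (1 / Upsilon M Q r) := by
        gcongr
        rw [div_lt_one hr0]; linarith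
    _ = 1 / Upsilon M Q r := one_mul _
end
end
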